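/- arXiv:2103.15983 — 2 statements merged into one kernel-verified Lean document; each statement's English description precedes it below -/
import Mathlib

section
/- Let D be a finite subset of ℕ^d \ {0} that is an antichain with respect to the natural partial order, and consider the collection of all generalized numerical semigroups S ⊆ ℕ^d with D ⊆ H(S). Then a GNS S in this collection is maximal in the collection with respect to set inclusion if and only if S is quasi-irreducible and FA(S) = D. -/
open Finset

/-- A generalized numerical semigroup (GNS) in `ℕ^d`: contains `0`, is closed under
componentwise addition, and has finite complement. -/
def IsGNS {d : ℕ} (S : Set (Fin d → ℕ)) : Prop :=
  (0 : Fin d → ℕ) ∈ S ∧ (∀ a ∈ S, ∀ b ∈ S, a + b ∈ S) ∧ Sᶜ.Finite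

/-- A relaxed monomial order on `ℕ^d`: a (strict) total order `r` such that
`r v w → r v (w + u)` and `0` is below every nonzero element. -/
def IsRMO {d : ℕ} (r : (Fin d → ℕ) → (Fin d → ℕ) → Prop) : Prop :=
  IsStrictTotalOrder (Fin d → ℕ) r ∧
  (∀ v w u : Fin d → ℕ, r v w → r v (w + u)) ∧
  (∀ v : Fin d → ℕ, v ≠ 0 → r 0 v)

/-- `F` is the Frobenius gap of `S` with respect to the order `r`, i.e. the
`r`-maximum of the gap set `ℕ^d \ S`. -/
def IsFrobGapWrt {d : ℕ} (S : Set (Fin d → ℕ))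
    (r : (Fin d → ℕ) → (Fin d → ℕ) → Prop) (F : Fin d → ℕ) : Prop :=
  F ∉ S ∧ ∀ x, x ∉ S → x ≠ F → r x F

/-- `F` is a Frobenius allowable gap of `S`: it is the Frobenius gap with respect to
some relaxed monomial order. -/
def FrobAllowable {d : ℕ} (S : Set (Fin d → ℕ)) (F : Fin d → ℕ) : Prop :=
  ∃ r, IsRMO r ∧ IsFrobGapWrt S r F

/-- `F` is a maximal gap of `S` with respect to the natural (componentwise)
partial order on `ℕ^d`. -/
def MaxGap {d : ℕ} (S : Set (Fin d → ℕ)) (F : Fin d → ℕ) : Prop :=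
  F ∉ S ∧ ∀ x, x ∉ S → F ≤ x → x = F

/-- The set of Frobenius allowable gaps of `S`, i.e. the maximal elements of the gap
set under the natural partial order. -/
def FA {d : ℕ} (S : Set (Fin d → ℕ)) : Set (Fin d → ℕ) := {F | MaxGap S F}

/-- The set of pseudo-Frobenius gaps of `S`. -/
def PF {d : ℕ} (S : Set (Fin d → ℕ)) : Set (Fin d → ℕ) :=
  {P | P ∉ S ∧ ∀ s ∈ S, s ≠ 0 → P + s ∈ S}

/-- `S` is quasi-irreducible: for every gap `x`, either `2x` is Frobenius allowable or
`F - x ∈ S` for some Frobenius allowable gap `F`. -/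
def QuasiIrreducible {d : ℕ} (S : Set (Fin d → ℕ)) : Prop :=
  ∀ x, x ∉ S → (x + x ∈ FA S ∨ ∃ F ∈ FA S, ∃ s ∈ S, x + s = F)

/-- `S` is a Frobenius GNS with Frobenius gap `F`: the gap set has `F` as its unique
maximal element under the natural partial order. -/
def IsFrobeniusGNS {d : ℕ} (S : Set (Fin d → ℕ)) (F : Fin d → ℕ) : Prop :=
  IsGNS S ∧ MaxGap S F ∧ ∀ x, MaxGap S x → x = F

/-- `‖F‖ = ∏ i (F^(i) + 1)`, the number of lattice points in the box `[0, F]`. -/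
def normF {d : ℕ} (F : Fin d → ℕ) : ℕ := ∏ i, (F i + 1)

/-- `N(F)`: the number of Frobenius GNS in `ℕ^d` with Frobenius gap `F`. -/
noncomputable def NF {d : ℕ} (F : Fin d → ℕ) : ℕ :=
  {S : Set (Fin d → ℕ) | IsFrobeniusGNS S F}.ncard

/-!
A maximal element of the family cannot miss a maximal gap `F ∉ D`, since adjoining `F` to `S`
gives a larger GNS; so `FA(S) ⊆ D`, and equality follows because every gap lies below a maximal
gap and `D` is an antichain. If `S` were maximal but not quasi-irreducible, take a gap `x`
violating quasi-irreducibility that is maximal for `≤`. No `x + t` with `t ∈ S` is in `FA(S)`,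
so a gap `y = x + u > x` with `u + S ⊆ S` must have `2y ∈ FA(S)`. As `FA(S)` is an antichain,
comparing `2(x + s)` with `2(x + 2s)`, and `4x` with `6x`, shows that `x + s ∈ S` for every
nonzero `s ∈ S` and that `2x ∈ S`. Then `S ∪ {x}` is again a GNS avoiding `D`.
Conversely, if `S` is quasi-irreducible, any semigroup `S' ⊋ S` contains a gap `x` of `S`, and
with it `2x` or some `F = x + s`, both in `FA(S) = D`.
-/

section

variable {d : ℕ} {S : Set (Fin d → ℕ)}

lemma MaxGap.add_mem {F : Fin d → ℕ} (hF : MaxGap S F) {y : Fin d → ℕ} (hy : y ≠ 0) :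
    F + y ∈ S := by
  by_contra h
  exact hy (add_eq_left.mp (hF.2 _ h le_self_add))

lemma eq_zero_of_mem_FA_of_add_mem_FA {F u : Fin d → ℕ} (hF : F ∈ FA S) (hFu : F + u ∈ FA S) :
    u = 0 :=
  add_eq_left.mp (hF.2 _ hFu.1 le_self_add)

lemma exists_maxGap_ge (hfin : Sᶜ.Finite) {x : Fin d → ℕ} (hx : x ∉ S) :
    ∃ F, MaxGap S F ∧ x ≤ F := by
  obtain ⟨F, hxF, hF⟩ := hfin.exists_le_maximal hx
  exact ⟨F, ⟨hF.1, fun y hy hFy => le_antisymm (hF.2 hy hFy) hFy⟩, hxF⟩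

lemma IsGNS.insert_of_add_mem (hS : IsGNS S) {x : Fin d → ℕ} (hx : ∀ s ∈ S, s ≠ 0 → x + s ∈ S)
    (h2x : x + x ∈ S) : IsGNS (insert x S) := by
  obtain ⟨h0, hadd, hfin⟩ := hS
  have hxs : ∀ s ∈ S, x + s ∈ insert x S := fun s hs => by
    rcases eq_or_ne s 0 with rfl | hs0
    · simp
    · exact Or.inr (hx s hs hs0)
  refine ⟨Or.inr h0, ?_, hfin.subset (Set.compl_subset_compl.mpr (Set.subset_insert x S))⟩
  rintro a (rfl | ha) b (rfl | hb)
  · exact Or.inr h2x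
  · exact hxs b hb
  · rw [add_comm]
    exact hxs a ha
  · exact Or.inr (hadd a ha b hb)

lemma IsGNS.insert_maxGap (hS : IsGNS S) {F : Fin d → ℕ} (hF : MaxGap S F) :
    IsGNS (insert F S) :=
  hS.insert_of_add_mem (fun _ _ hs => hF.add_mem hs) (hF.add_mem fun h => hF.1 (h ▸ hS.1))

/- In the next two lemmas `x` is a gap that is maximal among those violating
quasi-irreducibility. -/
lemma add_mem_of_maximal_bad_gap (hadd : ∀ a ∈ S, ∀ b ∈ S, a + b ∈ S) {x : Fin d → ℕ}
    (hreach : ∀ t ∈ S, x + t ∉ FA S)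
    (habove : ∀ y, y ∉ S → x < y → y + y ∈ FA S ∨ ∃ F ∈ FA S, ∃ s ∈ S, y + s = F)
    {s : Fin d → ℕ} (hs : s ∈ S) (hs0 : s ≠ 0) : x + s ∈ S := by
  have hdouble : ∀ u ∈ S, u ≠ 0 → x + u ∉ S → (x + u) + (x + u) ∈ FA S := by
    intro u hu hu0 hxu
    refine (habove _ hxu (lt_add_of_pos_right x (pos_iff_ne_zero.2 hu0))).resolve_right ?_
    rintro ⟨F, hF, t, ht, rfl⟩
    exact hreach (u + t) (hadd _ hu _ ht) (by rwa [← add_assoc])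
  by_contra hxs
  have h1 := hdouble s hs hs0 hxs
  by_cases hz : x + (s + s) ∈ S
  · exact hreach _ hz (by convert h1 using 1; abel)
  · have h2 := hdouble _ (hadd _ hs _ hs) (by simpa [add_eq_zero] using hs0) hz
    have hss : s + s = 0 := eq_zero_of_mem_FA_of_add_mem_FA h1 (by convert h2 using 1; abel)
    exact hs0 (add_eq_zero.mp hss).1

lemma add_self_mem_of_maximal_bad_gap (hS : IsGNS S) {x : Fin d → ℕ} (hxS : x ∉ S)
    (hx2 : x + x ∉ FA S) (hreach : ∀ t ∈ S, x + t ∉ FA S)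
    (habove : ∀ y, y ∉ S → x < y → y + y ∈ FA S ∨ ∃ F ∈ FA S, ∃ s ∈ S, y + s = F)
    (hpf : ∀ s ∈ S, s ≠ 0 → x + s ∈ S) : x + x ∈ S := by
  have hx0 : x ≠ 0 := fun h => hxS (h ▸ hS.1)
  have hxx0 : x + x ≠ 0 := fun h => hx0 (add_eq_zero.mp h).1
  have hpf2 : ∀ s ∈ S, s ≠ 0 → x + (x + s) ∈ S := fun s hs hs0 =>
    hpf _ (hpf s hs hs0) fun h => hx0 (add_eq_zero.mp h).1
  by_contra h2x
  have h4x : (x + x) + (x + x) ∈ FA S := by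
    refine (habove _ h2x (lt_add_of_pos_right x (pos_iff_ne_zero.2 hx0))).resolve_right ?_
    rintro ⟨F, hF, t, ht, rfl⟩
    rcases eq_or_ne t 0 with rfl | ht0
    · exact hx2 (by simpa using hF)
    · exact hreach _ (hpf t ht ht0) (by rwa [← add_assoc])
  have h3x : x + (x + x) ∉ S := fun h => hreach _ h (by convert h4x using 1; abel)
  rcases habove _ h3x (lt_add_of_pos_right x (pos_iff_ne_zero.2 hxx0)) with
    h6x | ⟨F, hF, t, ht, rfl⟩
  · exact hxx0 (eq_zero_of_mem_FA_of_add_mem_FA h4x (by convert h6x using 1; abel))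
  · rcases eq_or_ne t 0 with rfl | ht0
    · exact hx0 (eq_zero_of_mem_FA_of_add_mem_FA hF (by convert h4x using 1; abel))
    · exact hreach _ (hpf2 t ht ht0) (by convert hF using 1; abel)

lemma exists_isGNS_insert_of_not_quasiIrreducible (hS : IsGNS S) (hQI : ¬QuasiIrreducible S) :
    ∃ x ∉ S, x ∉ FA S ∧ IsGNS (insert x S) := by
  simp only [QuasiIrreducible, not_forall] at hQI
  obtain ⟨x₀, hx₀S, hx₀⟩ := hQI
  obtain ⟨x, -, ⟨hxS, hbad⟩, hxmax⟩ := Set.Finite.exists_le_maximal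
    (s := {y | y ∉ S ∧ ¬(y + y ∈ FA S ∨ ∃ F ∈ FA S, ∃ s ∈ S, y + s = F)})
    (hS.2.2.subset fun y hy => hy.1) ⟨hx₀S, hx₀⟩
  obtain ⟨hx2, hreach⟩ := not_or.mp hbad
  have hreach' : ∀ t ∈ S, x + t ∉ FA S := fun t ht hF => hreach ⟨_, hF, t, ht, rfl⟩
  have habove : ∀ y, y ∉ S → x < y → y + y ∈ FA S ∨ ∃ F ∈ FA S, ∃ s ∈ S, y + s = F :=
    fun y hyS hxy => by_contra fun hy => hxy.not_ge (hxmax ⟨hyS, hy⟩ hxy.le)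
  have hpf := fun s => add_mem_of_maximal_bad_gap hS.2.1 hreach' habove (s := s)
  refine ⟨x, hxS, fun hx => hreach' 0 hS.1 (by simpa using hx), hS.insert_of_add_mem hpf ?_⟩
  exact add_self_mem_of_maximal_bad_gap hS hxS hx2 hreach' habove hpf

lemma eq_of_quasiIrreducible_of_subset (hQI : QuasiIrreducible S) {S' : Set (Fin d → ℕ)}
    (hadd' : ∀ a ∈ S', ∀ b ∈ S', a + b ∈ S') (hFA : FA S ⊆ S'ᶜ) (hSS' : S ⊆ S') : S' = S := by
  refine (Set.Subset.antisymm ?_ hSS')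
  intro y hyS'
  by_contra hyS
  rcases hQI y hyS with h2y | ⟨F, hF, s, hs, rfl⟩
  · exact hFA h2y (hadd' y hyS' y hyS')
  · exact hFA hF (hadd' y hyS' s (hSS' hs))

end

theorem maximal_iff_quasiIrreducible_general {d : ℕ} (D : Set (Fin d → ℕ))
    (hDanti : ∀ x ∈ D, ∀ y ∈ D, x ≤ y → x = y)
    (S : Set (Fin d → ℕ)) (hS : IsGNS S) (hDS : D ⊆ Sᶜ) :
    (∀ S' : Set (Fin d → ℕ), IsGNS S' → D ⊆ S'ᶜ → S ⊆ S' → S' = S) ↔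
      (QuasiIrreducible S ∧ FA S = D) := by
  constructor
  · intro hmax
    have hmem : ∀ x, IsGNS (insert x S) → x ∉ D → x ∈ S := fun x hins hxD => by
      have hDins : D ⊆ (insert x S)ᶜ := fun y hy hyins =>
        hyins.elim (fun hyx => hxD (hyx ▸ hy)) (hDS hy)
      exact hmax _ hins hDins (Set.subset_insert x S) ▸ Set.mem_insert x S
    have hFA_sub : FA S ⊆ D := fun F hF => by
      by_contra hFD
      exact hF.1 (hmem F (hS.insert_maxGap hF) hFD)
    have hFA : FA S = D := by
      refine hFA_sub.antisymm fun x hxD => ?_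
      obtain ⟨F, hF, hxF⟩ := exists_maxGap_ge hS.2.2 (hDS hxD)
      rwa [hDanti x hxD F (hFA_sub hF) hxF]
    refine ⟨by_contra fun hQI => ?_, hFA⟩
    obtain ⟨x, hxS, hxFA, hins⟩ := exists_isGNS_insert_of_not_quasiIrreducible hS hQI
    exact hxS (hmem x hins (hFA ▸ hxFA))
  · rintro ⟨hQI, hFA⟩ S' hS' hDS' hSS'
    exact eq_of_quasiIrreducible_of_subset hQI hS'.2.1 (hFA ▸ hDS') hSS'

/-- Let `D` be a finite antichain in `ℕ^d \ {0}`. Among the GNS `S` with `D ⊆ H(S)`,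
the maximal ones (under inclusion) are exactly the quasi-irreducible GNS with
`FA(S) = D`. -/
theorem maximal_iff_quasiIrreducible {d : ℕ} (D : Set (Fin d → ℕ)) (hDfin : D.Finite)
    (hD0 : (0 : Fin d → ℕ) ∉ D) (hDanti : ∀ x ∈ D, ∀ y ∈ D, x ≤ y → x = y)
    (S : Set (Fin d → ℕ)) (hS : IsGNS S) (hDS : D ⊆ Sᶜ) :
    (∀ S' : Set (Fin d → ℕ), IsGNS S' → D ⊆ S'ᶜ → S ⊆ S' → S' = S) ↔
      (QuasiIrreducible S ∧ FA S = D) :=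
  maximal_iff_quasiIrreducible_general D hDanti S hS hDS
end

section
/- Let S ⊆ ℕ^d be a Frobenius generalized numerical semigroup with Frobenius gap F = F(S), and let T(S) = {x ∈ ℕ^d | F − x ∈ (ℤ^d \ S) ∪ {0}} (difference taken in ℤ^d). Then {x ∈ ℕ^d | x + T(S) ⊆ T(S)} = S ∪ PF(S). -/
open Finset

/-- The set `T(S) = {x ∈ ℕ^d ∣ F - x ∈ (ℤ^d \ S) ∪ {0}}`, where the difference is
taken in `ℤ^d` and `S` is regarded as a subset of `ℤ^d`. -/
def TSet {d : ℕ} (S : Set (Fin d → ℕ)) (F : Fin d → ℕ) : Set (Fin d → ℕ) :=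
  {x | (fun i => (F i : ℤ) - (x i : ℤ)) ∈
      ((fun (s : Fin d → ℕ) => (fun i => (s i : ℤ))) '' S)ᶜ ∪ {0}}

/-! Since the difference `F - t` is taken in `ℤ^d`, `t ∈ T(S)` just means that `t = F` or no
`u ∈ S` has `u + t = F`. If `x ∈ S ∪ PF(S)` and `u + x + t = F` with `u ∈ S`, `u ≠ 0`, then
`u + x ∈ S` witnesses `t ∉ T(S)`, so translation by `x` preserves `T(S)`. Conversely, if `x` is
a gap and `x + s` is a gap for some nonzero `s ∈ S`, then `x + s ≤ F` since `F` is the only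
maximal gap, and `t = F - (x + s)` lies in `T(S)` while `x + t = F - s` does not. -/

section

variable {d : ℕ} {S : Set (Fin d → ℕ)} {F : Fin d → ℕ}

lemma mem_TSet_iff {t : Fin d → ℕ} : t ∈ TSet S F ↔ t = F ∨ ∀ u ∈ S, u + t ≠ F := by
  simp only [TSet, Set.mem_union, Set.mem_compl_iff, Set.mem_image, Set.mem_singleton_iff,
    Set.mem_ofPred_eq, funext_iff, Pi.zero_apply, Pi.add_apply, not_exists, not_and, ne_eq]
  constructor
  · rintro (hS | hF)
    · exact Or.inr fun u hu hut => hS u hu fun i => by have := hut i; omega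
    · exact Or.inl fun i => by have := hF i; omega
  · rintro (hF | hS)
    · exact Or.inr fun i => by have := hF i; omega
    · exact Or.inl fun u hu hut => hS u hu fun i => by have := hut i; omega

lemma IsFrobeniusGNS.le_of_notMem (h : IsFrobeniusGNS S F) {x : Fin d → ℕ} (hx : x ∉ S) :
    x ≤ F := by
  obtain ⟨m, hxm, hm⟩ := h.1.2.2.exists_le_maximal hx
  have hmF : m = F := h.2.2 m ⟨hm.1, fun y hy hmy => le_antisymm (hm.2 hy hmy) hmy⟩
  exact hmF ▸ hxm

lemma add_mem_of_mem_union_PF (hadd : ∀ a ∈ S, ∀ b ∈ S, a + b ∈ S) {x u : Fin d → ℕ}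
    (hx : x ∈ S ∪ PF S) (hu : u ∈ S) (hu0 : u ≠ 0) : u + x ∈ S := by
  rcases hx with hxS | ⟨-, hxPF⟩
  · exact hadd u hu x hxS
  · exact add_comm x u ▸ hxPF u hu hu0

lemma add_mem_TSet_of_mem_union_PF (hadd : ∀ a ∈ S, ∀ b ∈ S, a + b ∈ S) {x t : Fin d → ℕ}
    (hx : x ∈ S ∪ PF S) (ht : t ∈ TSet S F) : x + t ∈ TSet S F := by
  refine mem_TSet_iff.2 (or_iff_not_imp_left.2 fun hxt u hu hF => ?_)
  have hu0 : u ≠ 0 := by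
    rintro rfl
    exact hxt (by simpa using hF)
  have hF' : (u + x) + t = F := by rw [← hF, add_assoc]
  rcases mem_TSet_iff.1 ht with rfl | ht
  · exact hu0 (eq_zero_of_add_right (add_eq_right.1 hF'))
  · exact ht _ (add_mem_of_mem_union_PF hadd hx hu hu0) hF'

lemma mem_union_PF_of_forall_add_mem_TSet (hle : ∀ y ∉ S, y ≤ F) {x : Fin d → ℕ}
    (hx : ∀ t ∈ TSet S F, x + t ∈ TSet S F) : x ∈ S ∪ PF S := by
  refine or_iff_not_imp_left.2 fun hxS => ⟨hxS, fun s hs hs0 => ?_⟩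
  by_contra hxs
  obtain ⟨t, hF⟩ := exists_add_of_le (hle _ hxs)
  have ht : t ∈ TSet S F :=
    mem_TSet_iff.2 <| Or.inr fun u hu hut =>
      hxs (add_right_cancel (hut.trans hF) ▸ hu)
  rcases mem_TSet_iff.1 (hx t ht) with hxt | hxt
  · exact hs0 (add_eq_right.1 (by rw [← add_assoc, add_comm s x, ← hF, hxt]))
  · exact hxt s hs (by rw [hF, ← add_assoc, add_comm s x])
end

/-- For a Frobenius GNS `S` with Frobenius gap `F`,
`{x ∈ ℕ^d ∣ x + T(S) ⊆ T(S)} = S ∪ PF(S)`. -/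
theorem add_TSet_subset_eq {d : ℕ} (S : Set (Fin d → ℕ)) (F : Fin d → ℕ)
    (h : IsFrobeniusGNS S F) :
    {x : Fin d → ℕ | ∀ t ∈ TSet S F, x + t ∈ TSet S F} = S ∪ PF S := by
  ext x
  exact ⟨mem_union_PF_of_forall_add_mem_TSet fun _ => h.le_of_notMem,
    fun hx _ => add_mem_TSet_of_mem_union_PF h.1.2.1 hx⟩
end
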